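/- Let W be a random variable that equals 0 with probability 1 − c and, with probability c, equals a Binomial(⌈n^{a}⌉, min(1, c·n^{2−d})) random variable, where c ∈ (0,1), a > 0, d > 2 are fixed with a > d − 2. Then for all sufficiently large n, W stochastically dominates the random variable U that is 0 with probability 1 − c/2 and ⌈4/c⌉ with probability c/2. -/

import Mathlib

/-!
Write `λ = M p` for the mean of `Bin(M, p)`. Each term `C(M,j) p^j (1-p)^(M-j)` with `j < K`
is at most `(Mp)^j e^{-p(M-j)} ≤ (1+λ)^K e^{K-λ}`, so the lower tail `P(Bin < K)` is at most
`K (1+λ)^K e^{K-λ}`, which tends to `0` as `λ → ∞`. For `M = ⌈n^a⌉` and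
`p = min(1, c n^{2-d})` the mean is at least `min(n^a, c n^{a+2-d})`, which tends to infinity
because `a > 0` and `a > d - 2`. Hence, for large `n`, `P(Bin ≥ k) ≥ 1/2` for every
`k ≤ ⌈4/c⌉`, and `P(W ≥ k) ≥ c/2`.
-/

open Finset Filter Real Topology

noncomputable def binomialTerm (M : ℕ) (p : ℝ) (j : ℕ) : ℝ :=
  M.choose j * p ^ j * (1 - p) ^ (M - j)

section BinomialTail

variable {p : ℝ}

theorem binomialTerm_nonneg (hp0 : 0 ≤ p) (hp1 : p ≤ 1) (M j : ℕ) :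
    0 ≤ binomialTerm M p j := by
  have : 0 ≤ 1 - p := sub_nonneg.2 hp1
  unfold binomialTerm
  positivity

theorem sum_range_binomialTerm (M : ℕ) : ∑ j ∈ range (M + 1), binomialTerm M p j = 1 := by
  have h := add_pow p (1 - p) M
  rw [add_sub_cancel, one_pow] at h
  rw [h]
  exact sum_congr rfl fun j _ => by unfold binomialTerm; ring

theorem one_le_sum_range_add_sum_Icc_binomialTerm (hp0 : 0 ≤ p) (hp1 : p ≤ 1) (M k : ℕ) :
    1 ≤ ∑ j ∈ range k, binomialTerm M p j + ∑ j ∈ Icc k M, binomialTerm M p j := by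
  have hdisj : Disjoint (range k) (Icc k M) :=
    disjoint_left.2 fun j h₁ h₂ => by simp only [mem_range, mem_Icc] at h₁ h₂; omega
  calc (1 : ℝ) = ∑ j ∈ range (M + 1), binomialTerm M p j := (sum_range_binomialTerm M).symm
    _ ≤ ∑ j ∈ range k ∪ Icc k M, binomialTerm M p j :=
        sum_le_sum_of_subset_of_nonneg
          (fun j hj => by simp only [mem_union, mem_range, mem_Icc] at hj ⊢; omega)
          (fun j _ _ => binomialTerm_nonneg hp0 hp1 M j)
    _ = _ := sum_union hdisj

theorem binomialTerm_le (hp0 : 0 ≤ p) (hp1 : p ≤ 1) {M j K : ℕ} (hj : j ≤ K) :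
    binomialTerm M p j ≤ (1 + M * p) ^ K * exp (K - M * p) := by
  have hmean : 0 ≤ (M : ℝ) * p := by positivity
  have hchoose : M.choose j * p ^ j ≤ (1 + M * p) ^ K :=
    calc (M.choose j : ℝ) * p ^ j ≤ (M : ℝ) ^ j * p ^ j := by
          gcongr; exact_mod_cast Nat.choose_le_pow M j
      _ = (M * p) ^ j := (mul_pow _ _ _).symm
      _ ≤ (1 + M * p) ^ j := by gcongr; linarith
      _ ≤ (1 + M * p) ^ K := pow_le_pow_right₀ (by linarith) hj
  have hgap : (M : ℝ) ≤ ((M - j : ℕ) : ℝ) + K := by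
    have : M ≤ (M - j) + K := by omega
    exact_mod_cast this
  have hsurvive : (1 - p) ^ (M - j) ≤ exp (K - M * p) :=
    calc (1 - p) ^ (M - j) ≤ exp (-p) ^ (M - j) :=
          pow_le_pow_left₀ (by linarith) (one_sub_le_exp_neg p) _
      _ = exp (-(p * (M - j : ℕ))) := by rw [← exp_nat_mul]; ring_nf
      _ ≤ exp (K - M * p) := exp_le_exp.2 (by nlinarith)
  exact mul_le_mul hchoose hsurvive (by have := sub_nonneg.2 hp1; positivity) (by positivity)

theorem sum_range_binomialTerm_le (hp0 : 0 ≤ p) (hp1 : p ≤ 1) (M K : ℕ) :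
    ∑ j ∈ range K, binomialTerm M p j ≤ K * (1 + M * p) ^ K * exp (K - M * p) := by
  refine (sum_le_card_nsmul _ _ _ fun j hj => binomialTerm_le hp0 hp1 (mem_range.1 hj).le).trans ?_
  rw [card_range, nsmul_eq_mul, mul_assoc]

end BinomialTail

theorem tendsto_mul_one_add_pow_mul_exp_sub_nhds_zero (K : ℕ) :
    Tendsto (fun x : ℝ => K * (1 + x) ^ K * exp (K - x)) atTop (𝓝 0) := by
  have h := ((tendsto_pow_mul_exp_neg_atTop_nhds_zero K).comp
    (tendsto_atTop_add_const_right _ 1 tendsto_id)).const_mul (K * exp (K + 1))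
  rw [mul_zero] at h
  refine h.congr fun x => ?_
  have hsplit : exp (K - x) = exp (K + 1) * exp (-(x + 1)) := by rw [← exp_add]; ring_nf
  simp only [Function.comp_apply, id, hsplit]
  ring

theorem eventually_le_sum_Icc_binomialTerm {ι : Type*} {l : Filter ι} {M : ι → ℕ} {p : ι → ℝ}
    (hp0 : ∀ i, 0 ≤ p i) (hp1 : ∀ i, p i ≤ 1)
    (hmean : Tendsto (fun i => M i * p i) l atTop) (K : ℕ) {q : ℝ} (hq : q < 1) :
    ∀ᶠ i in l, ∀ k ≤ K, q ≤ ∑ j ∈ Icc k (M i), binomialTerm (M i) (p i) j := by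
  filter_upwards [((tendsto_mul_one_add_pow_mul_exp_sub_nhds_zero K).comp hmean).eventually_lt_const
    (sub_pos.2 hq)] with i hsmall k hk
  have hcover := one_le_sum_range_add_sum_Icc_binomialTerm (hp0 i) (hp1 i) (M i) k
  have hmono : ∑ j ∈ range k, binomialTerm (M i) (p i) j ≤
      ∑ j ∈ range K, binomialTerm (M i) (p i) j :=
    sum_le_sum_of_subset_of_nonneg (range_subset_range.2 hk)
      (fun j _ _ => binomialTerm_nonneg (hp0 i) (hp1 i) _ j)
  have hbound := sum_range_binomialTerm_le (hp0 i) (hp1 i) (M i) K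
  simp only [Function.comp_apply] at hsmall
  linarith

theorem tendsto_ceil_rpow_mul_min_atTop {c a d : ℝ} (hc : 0 < c) (ha : 0 < a) (had : d - 2 < a) :
    Tendsto (fun n : ℕ => (⌈(n : ℝ) ^ a⌉₊ : ℝ) * min 1 (c * (n : ℝ) ^ (2 - d))) atTop atTop := by
  have hpow : ∀ {e : ℝ}, 0 < e → Tendsto (fun n : ℕ => (n : ℝ) ^ e) atTop atTop :=
    fun he => (tendsto_rpow_atTop he).comp tendsto_natCast_atTop_atTop
  have hmin := tendsto_inf_atTop atTop (hpow ha)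
    ((hpow (e := a + (2 - d)) (by linarith)).const_mul_atTop hc)
  refine tendsto_atTop_mono' _ ?_ hmin
  filter_upwards [eventually_ge_atTop 1] with n hn
  have hn : (0 : ℝ) < n := by exact_mod_cast hn
  calc (n : ℝ) ^ a ⊓ c * (n : ℝ) ^ (a + (2 - d))
        = (n : ℝ) ^ a * min 1 (c * (n : ℝ) ^ (2 - d)) := by
        rw [mul_min_of_nonneg _ _ (by positivity), mul_one, rpow_add hn, mul_left_comm]
    _ ≤ _ := mul_le_mul_of_nonneg_right (Nat.le_ceil _) (le_min zero_le_one (by positivity))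

theorem stmt4_general (c a : ℝ) (d : ℕ) (hc0 : 0 < c) (ha : 0 < a)
    (had : (d : ℝ) - 2 < a) :
    ∃ N : ℕ, ∀ n : ℕ, N ≤ n → ∀ k : ℕ, 1 ≤ k →
      (if k ≤ ⌈4 / c⌉₊ then c / 2 else 0) ≤
        c * ∑ j ∈ Finset.Icc k ⌈(n : ℝ) ^ a⌉₊,
          (Nat.choose ⌈(n : ℝ) ^ a⌉₊ j : ℝ) *
            (min 1 (c * (n : ℝ) ^ ((2 : ℝ) - d))) ^ j *
            (1 - min 1 (c * (n : ℝ) ^ ((2 : ℝ) - d))) ^ (⌈(n : ℝ) ^ a⌉₊ - j) := by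
  have hp0 (n : ℕ) : 0 ≤ min 1 (c * (n : ℝ) ^ ((2 : ℝ) - d)) :=
    le_min zero_le_one (by positivity)
  have hp1 (n : ℕ) : min 1 (c * (n : ℝ) ^ ((2 : ℝ) - d)) ≤ 1 := min_le_left _ _
  rw [← eventually_atTop]
  filter_upwards [eventually_le_sum_Icc_binomialTerm hp0 hp1
    (tendsto_ceil_rpow_mul_min_atTop hc0 ha had) ⌈4 / c⌉₊ one_half_lt_one] with n hn k _
  split_ifs with hk
  · calc c / 2 = c * (1 / 2) := by ring
      _ ≤ _ := mul_le_mul_of_nonneg_left (hn k hk) hc0.le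
  · exact mul_nonneg hc0.le (sum_nonneg fun j _ => binomialTerm_nonneg (hp0 n) (hp1 n) _ j)

/-- Tail-probability form of stochastic domination: the mixture `W` which is `0` with
probability `1 - c` and `Binomial(⌈n^a⌉, min 1 (c n^{2-d}))` with probability `c`
dominates the variable `U` taking value `⌈4/c⌉` with probability `c/2` and `0` otherwise,
for all sufficiently large `n`.  (`P(W ≥ k)` for `k ≥ 1` equals `c` times the binomial
upper tail; `P(U ≥ k) = c/2` for `1 ≤ k ≤ ⌈4/c⌉` and `0` beyond.) -/
theorem stmt4 (c a : ℝ) (d : ℕ) (hc0 : 0 < c) (hc1 : c < 1) (ha : 0 < a)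
    (hd : 2 < d) (had : (d : ℝ) - 2 < a) :
    ∃ N : ℕ, ∀ n : ℕ, N ≤ n → ∀ k : ℕ, 1 ≤ k →
      (if k ≤ ⌈4 / c⌉₊ then c / 2 else 0) ≤
        c * ∑ j ∈ Finset.Icc k ⌈(n : ℝ) ^ a⌉₊,
          (Nat.choose ⌈(n : ℝ) ^ a⌉₊ j : ℝ) *
            (min 1 (c * (n : ℝ) ^ ((2 : ℝ) - d))) ^ j *
            (1 - min 1 (c * (n : ℝ) ^ ((2 : ℝ) - d))) ^ (⌈(n : ℝ) ^ a⌉₊ - j) :=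
  stmt4_general c a d hc0 ha had
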